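/- Let X be a smooth projective variety and E, F globally generated vector bundles on X of dimension n. Then s_i(E^*)·s_{n-i}(F^*) ≥ 0 for all 0 ≤ i ≤ n, and E ⊕ F is big if and only if s_i(E^*)·s_{n-i}(F^*) > 0 for some i ∈ {0,…,n}. In particular, if E is big then E ⊕ F is big. -/

import Mathlib

theorem Finset.sum_range_succ_pos_iff_of_nonneg {M : Type*} [AddCommMonoid M] [PartialOrder M]
    [AddLeftMono M] {f : ℕ → M} (n : ℕ) (hf : ∀ i ≤ n, 0 ≤ f i) :
    0 < ∑ i ∈ Finset.range (n + 1), f i ↔ ∃ i ≤ n, 0 < f i := by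
  simp only [Finset.sum_pos_iff_of_nonneg fun i hi => hf i (Finset.mem_range_succ_iff.mp hi),
    Finset.mem_range_succ_iff]

/-- `R` is the Chow ring of `X`, `deg` its degree map, and `sE i`, `sF i`, `sEF i` are the Segre
classes `s_i(E^*)`, `s_i(F^*)`, `s_i((E ⊕ F)^*)`. Global generation is encoded by `heffE`
(effectivity of `s_i(E^*)`) and `hnefF` (nefness of `s_j(F^*)`), bigness by its Segre-number
criterion `hBigE`, `hBigEF`. -/
theorem stmt_8 {R : Type*} [CommRing R] (n : ℕ) (deg : R →+ ℤ)
    (sE sF sEF : ℕ → R)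
    (eff : R → Prop)
    (heffE : ∀ i, eff (sE i))
    (hnefF : ∀ j, ∀ z : R, eff z → 0 ≤ deg (sF j * z))
    (hsF0 : sF 0 = 1)
    (hWhitney : sEF n = ∑ i ∈ Finset.range (n + 1), sE i * sF (n - i))
    (BigE BigEF : Prop)
    (hBigE : BigE ↔ 0 < deg (sE n))
    (hBigEF : BigEF ↔ 0 < deg (sEF n)) :
    (∀ i ≤ n, 0 ≤ deg (sE i * sF (n - i))) ∧
      (BigEF ↔ ∃ i ≤ n, 0 < deg (sE i * sF (n - i))) ∧
      (BigE → BigEF) := by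
  have nef_mul_eff : ∀ i, 0 ≤ deg (sE i * sF (n - i)) := fun i => by
    rw [mul_comm]
    exact hnefF _ _ (heffE i)
  have bigEF_iff : BigEF ↔ ∃ i ≤ n, 0 < deg (sE i * sF (n - i)) := by
    rw [hBigEF, hWhitney, map_sum,
      Finset.sum_range_succ_pos_iff_of_nonneg n fun i _ => nef_mul_eff i]
  refine ⟨fun i _ => nef_mul_eff i, bigEF_iff, fun hE => bigEF_iff.mpr ⟨n, le_rfl, ?_⟩⟩
  simpa [hsF0] using hBigE.mp hE
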